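/- arXiv:0811.3739 — 5 statements merged into one kernel-verified Lean document; each statement's English description precedes it below -/
import Mathlib

section
/- Let ρ be a density matrix on ℂ² ⊗ ℂ² whose rank is at least 2 (i.e., ρ is not a pure state). Then for every entangled unit vector φ ∈ ℂ² ⊗ ℂ² and every separable operation given by Kraus operators {A_k ⊗ B_k}_{k=1,…,n}, one has ∑_{k=1}^n (A_k ⊗ B_k) ρ (A_k ⊗ B_k)† ≠ |φ⟩⟨φ|. In other words, no separable operation deterministically transforms a mixed state on ℂ² ⊗ ℂ² into a pure entangled state. -/
open Kronecker Matrix ComplexOrder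

noncomputable section

/-- Product (simple) vector in `ℂ^a ⊗ ℂ^b`, identified with functions `Fin a × Fin b → ℂ`. -/
def IsSimpleVec {a b : ℕ} (v : Fin a × Fin b → ℂ) : Prop :=
  ∃ (x : Fin a → ℂ) (y : Fin b → ℂ), v = fun p => x p.1 * y p.2

/-- Rank-one projection `|v⟩⟨v|`. -/
def proj {d : Type*} [Fintype d] (v : d → ℂ) : Matrix d d ℂ :=
  Matrix.vecMulVec v (star v)

/-!
Write `ρ = R†R` and `N_k = (A_k ⊗ B_k) R†`, so that `∑ N_k N_k† = |φ⟩⟨φ|`. Compressing by the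
projection `1 - |φ⟩⟨φ|` gives a sum of positive matrices equal to zero, so every `N_k` has the
form `|φ⟩⟨c_k|`, and some `c_k` is nonzero. If `A_k` or `B_k` is singular it is an outer product
(this is where dimension 2 enters), so every vector in the range of `A_k ⊗ B_k`, in particular
a nonzero multiple of `φ`, is a product vector. Otherwise `A_k ⊗ B_k` is invertible and
`rank N_k = rank R ≥ rank ρ ≥ 2`, contradicting `rank |φ⟩⟨c_k| ≤ 1`.
-/

namespace Matrix

variable {K : Type*} [Field K]

theorem exists_eq_vecMulVec_of_det_eq_zero {M : Matrix (Fin 2) (Fin 2) K} (h : M.det = 0) :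
    ∃ x y : Fin 2 → K, M = vecMulVec x y := by
  rw [det_fin_two] at h
  by_cases h0 : M 0 = 0
  · refine ⟨![0, 1], M 1, ?_⟩
    ext i j
    fin_cases i
    · simp [vecMulVec_apply, h0]
    · simp [vecMulVec_apply]
  · obtain ⟨j, hj⟩ : ∃ j, M 0 j ≠ 0 := by
      by_contra! hM
      exact h0 (funext hM)
    refine ⟨![1, M 1 j / M 0 j], M 0, ?_⟩
    ext i k
    fin_cases i
    · simp [vecMulVec_apply]
    · change M 1 k = M 1 j / M 0 j * M 0 k
      rw [div_mul_eq_mul_div, eq_div_iff hj]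
      fin_cases j <;> fin_cases k <;> simp <;> first | linear_combination h | linear_combination -h

variable {R : Type*} [CommRing R] [PartialOrder R] [StarRing R] [StarOrderedRing R]
  [NoZeroDivisors R] {m n ι : Type*} [Fintype m] [Fintype n]

theorem eq_zero_of_sum_mul_conjTranspose_eq_zero {s : Finset ι} {M : ι → Matrix m n R}
    (h : ∑ k ∈ s, M k * (M k)ᴴ = 0) {k : ι} (hk : k ∈ s) : M k = 0 := by
  have htrace : ∑ j ∈ s, (M j * (M j)ᴴ).trace = 0 := by rw [← trace_sum, h, trace_zero]
  rw [Finset.sum_eq_zero_iff_of_nonneg fun j _ =>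
    (posSemidef_self_mul_conjTranspose _).trace_nonneg] at htrace
  exact trace_mul_conjTranspose_self_eq_zero_iff.mp (htrace k hk)

end Matrix

section Projection

variable {d m ι : Type*} [Fintype d] [Fintype m] {φ : d → ℂ}

theorem proj_mul_proj (hφ : star φ ⬝ᵥ φ = 1) : proj φ * proj φ = proj φ := by
  rw [proj, vecMulVec_mul_vecMulVec, hφ, one_smul]

theorem proj_ne_zero (hφ : star φ ⬝ᵥ φ = 1) : proj φ ≠ 0 := by
  intro h
  have := congrArg trace h
  rw [proj, trace_vecMulVec, ← dotProduct_comm, hφ, trace_zero] at this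
  exact one_ne_zero this

theorem eq_vecMulVec_of_sum_mul_conjTranspose_eq_proj [DecidableEq d] (hφ : star φ ⬝ᵥ φ = 1)
    {s : Finset ι} {N : ι → Matrix d m ℂ} (h : ∑ k ∈ s, N k * (N k)ᴴ = proj φ) {k : ι}
    (hk : k ∈ s) : N k = vecMulVec φ (star φ ᵥ* N k) := by
  set Q : Matrix d d ℂ := 1 - proj φ with hQ
  have hQP : Q * proj φ = 0 := by rw [hQ, sub_mul, one_mul, proj_mul_proj hφ, sub_self]
  have hsum : ∑ j ∈ s, (Q * N j) * (Q * N j)ᴴ = 0 := by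
    calc ∑ j ∈ s, (Q * N j) * (Q * N j)ᴴ = Q * (∑ j ∈ s, N j * (N j)ᴴ) * Qᴴ := by
          simp only [Finset.mul_sum, Finset.sum_mul, conjTranspose_mul, Matrix.mul_assoc]
      _ = 0 := by rw [h, hQP, Matrix.zero_mul]
  have hQN : Q * N k = 0 := eq_zero_of_sum_mul_conjTranspose_eq_zero hsum hk
  rw [hQ, Matrix.sub_mul, Matrix.one_mul, sub_eq_zero] at hQN
  rwa [← vecMulVec_mul]

end Projection

section SimpleVectors

variable {a b : ℕ} {m n : Type*} [Fintype m] [Fintype n]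

theorem IsSimpleVec.of_smul {c : ℂ} (hc : c ≠ 0) {v : Fin a × Fin b → ℂ}
    (h : IsSimpleVec (c • v)) : IsSimpleVec v := by
  obtain ⟨x, y, hxy⟩ := h
  refine ⟨c⁻¹ • x, y, funext fun p => ?_⟩
  have hp := congrFun hxy p
  simp only [Pi.smul_apply, smul_eq_mul] at hp ⊢
  rw [mul_assoc, ← hp, inv_mul_cancel_left₀ hc]

theorem isSimpleVec_vecMulVec_kronecker_mulVec (x : Fin a → ℂ) (y : m → ℂ)
    (B : Matrix (Fin b) n ℂ) (w : m × n → ℂ) : IsSimpleVec ((vecMulVec x y ⊗ₖ B) *ᵥ w) := by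
  refine ⟨x, fun j => ∑ p, y p.1 * B j p.2 * w p, funext fun q => ?_⟩
  simp only [mulVec, dotProduct, kroneckerMap_apply, vecMulVec_apply, Finset.mul_sum]
  exact Finset.sum_congr rfl fun p _ => by ring

theorem isSimpleVec_kronecker_vecMulVec_mulVec (A : Matrix (Fin a) m ℂ) (x : Fin b → ℂ)
    (y : n → ℂ) (w : m × n → ℂ) : IsSimpleVec ((A ⊗ₖ vecMulVec x y) *ᵥ w) := by
  refine ⟨fun i => ∑ p, A i p.1 * y p.2 * w p, x, funext fun q => ?_⟩
  simp only [mulVec, dotProduct, kroneckerMap_apply, vecMulVec_apply, Finset.sum_mul]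
  exact Finset.sum_congr rfl fun p _ => by ring

theorem isSimpleVec_kronecker_mulVec_of_det_eq_zero {A B : Matrix (Fin 2) (Fin 2) ℂ}
    (h : A.det = 0 ∨ B.det = 0) (w : Fin 2 × Fin 2 → ℂ) : IsSimpleVec ((A ⊗ₖ B) *ᵥ w) := by
  rcases h with hA | hB
  · obtain ⟨x, y, rfl⟩ := exists_eq_vecMulVec_of_det_eq_zero hA
    exact isSimpleVec_vecMulVec_kronecker_mulVec x y B w
  · obtain ⟨x, y, rfl⟩ := exists_eq_vecMulVec_of_det_eq_zero hB
    exact isSimpleVec_kronecker_vecMulVec_mulVec A x y w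

end SimpleVectors

theorem no_sep_distillation_two_two_general {n : ℕ}
    (ρ : Matrix (Fin 2 × Fin 2) (Fin 2 × Fin 2) ℂ)
    (hρ : ρ.PosSemidef) (hrank : 2 ≤ ρ.rank)
    (φ : Fin 2 × Fin 2 → ℂ) (hunit : star φ ⬝ᵥ φ = 1) (hent : ¬ IsSimpleVec φ)
    (A : Fin n → Matrix (Fin 2) (Fin 2) ℂ) (B : Fin n → Matrix (Fin 2) (Fin 2) ℂ) :
    ∑ k, (A k ⊗ₖ B k) * ρ * (A k ⊗ₖ B k)ᴴ ≠ proj φ := by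
  intro heq
  open scoped MatrixOrder in
  obtain ⟨R, rfl⟩ := CStarAlgebra.nonneg_iff_eq_star_mul_self.mp hρ.nonneg
  set N : Fin n → Matrix (Fin 2 × Fin 2) (Fin 2 × Fin 2) ℂ := fun k => (A k ⊗ₖ B k) * Rᴴ
  have hsum : ∑ k, N k * (N k)ᴴ = proj φ := by
    simpa only [N, conjTranspose_mul, conjTranspose_conjTranspose, star_eq_conjTranspose,
      Matrix.mul_assoc] using heq
  obtain ⟨k, hk⟩ : ∃ k, N k ≠ 0 := by
    by_contra! h
    exact proj_ne_zero hunit (by simpa [h] using hsum.symm)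
  obtain ⟨c, hc⟩ : ∃ c, N k = vecMulVec φ c :=
    ⟨_, eq_vecMulVec_of_sum_mul_conjTranspose_eq_proj hunit hsum (Finset.mem_univ k)⟩
  by_cases hdet : (A k).det = 0 ∨ (B k).det = 0
  · have hcol : (A k ⊗ₖ B k) *ᵥ (Rᴴ *ᵥ star c) = (c ⬝ᵥ star c) • φ := by
      rw [mulVec_mulVec, show (A k ⊗ₖ B k) * Rᴴ = N k from rfl, hc, vecMulVec_mulVec,
        op_smul_eq_smul]
    have hc0 : c ⬝ᵥ star c ≠ 0 := by
      rw [Ne, dotProduct_self_star_eq_zero]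
      rintro rfl
      exact hk (by rw [hc, vecMulVec_zero])
    exact hent ((hcol ▸ isSimpleVec_kronecker_mulVec_of_det_eq_zero hdet _).of_smul hc0)
  · push Not at hdet
    have hle : (N k).rank ≤ 1 := hc ▸ rank_vecMulVec_le _ _
    have heqR : (N k).rank = R.rank := by
      rw [rank_mul_eq_right_of_det_ne_zero _ _ (by simp [det_kronecker, hdet]), rank_conjTranspose]
    rw [star_eq_conjTranspose, rank_conjTranspose_mul_self] at hrank
    omega

theorem no_sep_distillation_two_two {n : ℕ}
    (ρ : Matrix (Fin 2 × Fin 2) (Fin 2 × Fin 2) ℂ)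
    (hρ : ρ.PosSemidef) (htr : ρ.trace = 1) (hrank : 2 ≤ ρ.rank)
    (φ : Fin 2 × Fin 2 → ℂ) (hunit : star φ ⬝ᵥ φ = 1) (hent : ¬ IsSimpleVec φ)
    (A : Fin n → Matrix (Fin 2) (Fin 2) ℂ) (B : Fin n → Matrix (Fin 2) (Fin 2) ℂ)
    (hcomp : ∑ k, (A k ⊗ₖ B k)ᴴ * (A k ⊗ₖ B k) = 1) :
    ∑ k, (A k ⊗ₖ B k) * ρ * (A k ⊗ₖ B k)ᴴ ≠ proj φ :=
  no_sep_distillation_two_two_general ρ hρ hrank φ hunit hent A B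
end
end

section
/- Let ρ be a density matrix on ℂ² ⊗ ℂ³ whose rank is at least 2 (i.e., ρ is not a pure state). Then for every entangled unit vector φ ∈ ℂ² ⊗ ℂ³ and every separable operation given by Kraus operators {A_k ⊗ B_k}_{k=1,…,n}, one has ∑_{k=1}^n (A_k ⊗ B_k) ρ (A_k ⊗ B_k)† ≠ |φ⟩⟨φ|. In other words, no separable operation deterministically transforms a mixed state on ℂ² ⊗ ℂ³ into a pure entangled state. -/
/-!
Suppose `∑ₖ Eₖ ρ Eₖ† = |φ⟩⟨φ|` with `Eₖ = Aₖ ⊗ Bₖ`. Positivity forces every `Eₖ` to map the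
range of `ρ` into `ℂ φ`. Some `E_{k₀}` sends a vector `w` of that range to a nonzero multiple of the
entangled `φ`, and since `rank ρ ≥ 2` it also kills a nonzero `x` of that range.

Reshape vectors of `ℂ² ⊗ ℂ³` into `2 × 3` matrices: `A ⊗ B` acts as `X ↦ A X Bᵀ`, and product
vectors are exactly the matrices of rank `≤ 1`. Now `rank (A W Bᵀ) = 2` forces `A` to be invertible
and `rank B ≥ 2`, so `A X Bᵀ = 0` gives `X Bᵀ = 0` and `rank X ≤ 3 - 2 = 1`: `x` is a product
vector. Hence every `Eₖ x` is a product vector in `ℂ φ`, so it vanishes, and completeness gives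
`x = ∑ₖ Eₖ† Eₖ x = 0`.
-/

open Kronecker Matrix ComplexOrder

noncomputable section

section Rank

variable {K l m n p : Type*} [Field K]

theorem Matrix.eq_zero_of_rank_eq_zero [Fintype n] {M : Matrix m n K} (h : M.rank = 0) :
    M = 0 := by
  classical
  rw [Matrix.rank, Submodule.finrank_eq_zero, LinearMap.range_eq_bot] at h
  ext i j
  simpa using congr_fun (LinearMap.congr_fun h (Pi.single j 1)) i

theorem Matrix.rank_add_card_le_of_mul_mul_eq_zero [Fintype l] [Fintype m] [Fintype n]
    [Fintype p] {A : Matrix l m K} {W X : Matrix m n K} {B : Matrix n p K}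
    (hW : Fintype.card m ≤ (A * W * B).rank) (hX : A * X * B = 0) :
    X.rank + Fintype.card m ≤ Fintype.card n := by
  have hA : Fintype.card m ≤ A.rank :=
    hW.trans ((rank_mul_le_left _ _).trans (rank_mul_le_left _ _))
  have hB : Fintype.card m ≤ B.rank := hW.trans (rank_mul_le_right _ _)
  have hXB : X * B = 0 := by
    rw [Matrix.mul_assoc] at hX
    have := rank_add_rank_le_card_of_mul_eq_zero hX
    exact eq_zero_of_rank_eq_zero (by omega)
  have := rank_add_rank_le_card_of_mul_eq_zero hXB
  omega

theorem Submodule.exists_mem_ne_zero_map_eq_zero {V W : Type*} [AddCommGroup V] [Module K V]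
    [AddCommGroup W] [Module K W] (f : V →ₗ[K] W) {p : Submodule K V} {q : Submodule K W}
    [FiniteDimensional K p] [FiniteDimensional K q] (hpq : p.map f ≤ q)
    (h : Module.finrank K q < Module.finrank K p) : ∃ x ∈ p, x ≠ 0 ∧ f x = 0 := by
  let g : p →ₗ[K] q := (f.domRestrict p).codRestrict q fun x => hpq ⟨x, x.2, rfl⟩
  obtain ⟨x, hx, hx0⟩ := (Submodule.ne_bot_iff _).mp (LinearMap.ker_ne_bot_of_finrank_lt (f := g) h)
  refine ⟨x, x.2, fun h0 => hx0 (Subtype.ext h0), ?_⟩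
  simpa [g] using congr_arg Subtype.val (LinearMap.mem_ker.mp hx)

end Rank

section ProductVectors

variable {R m n : Type*}

def coeffMatrix (v : m × n → R) : Matrix m n R := Matrix.of fun i j => v (i, j)

theorem coeffMatrix_kronecker_mulVec [CommSemiring R] [Fintype m] [Fintype n]
    (A : Matrix m m R) (B : Matrix n n R) (v : m × n → R) :
    coeffMatrix ((A ⊗ₖ B) *ᵥ v) = A * coeffMatrix v * Bᵀ := by
  -- Mathlib's `vec` stacks columns, so `v` is `vec (coeffMatrix v)ᵀ` definitionally.
  calc coeffMatrix ((A ⊗ₖ B) *ᵥ v)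
      = coeffMatrix ((A ⊗ₖ B) *ᵥ vec (coeffMatrix v)ᵀ) := rfl
    _ = (B * (coeffMatrix v)ᵀ * Aᵀ)ᵀ := by rw [kronecker_mulVec_vec]; rfl
    _ = A * coeffMatrix v * Bᵀ := by simp [transpose_mul, Matrix.mul_assoc]

theorem isSimpleVec_iff_rank_coeffMatrix_le_one {a b : ℕ} (v : Fin a × Fin b → ℂ) :
    IsSimpleVec v ↔ (coeffMatrix v).rank ≤ 1 := by
  constructor
  · rintro ⟨x, y, rfl⟩
    exact rank_vecMulVec_le x y
  · intro h
    rw [rank_eq_finrank_span_cols, finrank_le_one_iff] at h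
    obtain ⟨s, hs⟩ := h
    choose c hc using fun j => hs ⟨(coeffMatrix v).col j, Submodule.subset_span ⟨j, rfl⟩⟩
    refine ⟨s, c, funext fun ⟨i, j⟩ => ?_⟩
    have := congr_fun (congr_arg Subtype.val (hc j)) i
    rw [Submodule.coe_smul, Pi.smul_apply, smul_eq_mul] at this
    simpa [coeffMatrix, mul_comm] using this.symm

theorem IsSimpleVec.kronecker_mulVec {a b : ℕ} {v : Fin a × Fin b → ℂ} (hv : IsSimpleVec v)
    (A : Matrix (Fin a) (Fin a) ℂ) (B : Matrix (Fin b) (Fin b) ℂ) :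
    IsSimpleVec ((A ⊗ₖ B) *ᵥ v) := by
  rw [isSimpleVec_iff_rank_coeffMatrix_le_one, coeffMatrix_kronecker_mulVec] at *
  exact (rank_mul_le_left _ _).trans ((rank_mul_le_right _ _).trans hv)

theorem eq_zero_of_isSimpleVec_of_mem_span {a b : ℕ} {φ v : Fin a × Fin b → ℂ}
    (hφ : ¬ IsSimpleVec φ) (hv : v ∈ ℂ ∙ φ) (hs : IsSimpleVec v) : v = 0 := by
  obtain ⟨c, rfl⟩ := Submodule.mem_span_singleton.mp hv
  obtain rfl | hc := eq_or_ne c 0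
  · exact zero_smul ℂ φ
  obtain ⟨x, y, hxy⟩ := hs
  refine absurd ⟨c⁻¹ • x, y, funext fun p => ?_⟩ hφ
  have := congr_fun hxy p
  simp only [Pi.smul_apply, smul_eq_mul] at this ⊢
  rw [mul_assoc, ← this, inv_mul_cancel_left₀ hc]

theorem isSimpleVec_of_kronecker_mulVec_eq_zero {A : Matrix (Fin 2) (Fin 2) ℂ}
    {B : Matrix (Fin 3) (Fin 3) ℂ} {w x : Fin 2 × Fin 3 → ℂ}
    (hw : ¬ IsSimpleVec ((A ⊗ₖ B) *ᵥ w)) (hx : (A ⊗ₖ B) *ᵥ x = 0) : IsSimpleVec x := by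
  rw [isSimpleVec_iff_rank_coeffMatrix_le_one, coeffMatrix_kronecker_mulVec, not_le] at hw
  have hx' : A * coeffMatrix x * Bᵀ = 0 := by
    rw [← coeffMatrix_kronecker_mulVec, hx]; rfl
  have := rank_add_card_le_of_mul_mul_eq_zero (W := coeffMatrix w) (by rwa [Fintype.card_fin]) hx'
  rw [isSimpleVec_iff_rank_coeffMatrix_le_one]
  simp only [Fintype.card_fin] at this
  omega

end ProductVectors

section SeparableOperations

variable {ι d : Type*} [Fintype ι] [Fintype d]

theorem proj_mulVec (φ y : d → ℂ) : proj φ *ᵥ y = (star φ ⬝ᵥ y) • φ := by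
  rw [proj, vecMulVec_mulVec, op_smul_eq_smul]

theorem mem_span_of_forall_orthogonal {φ v : d → ℂ} (hφ : star φ ⬝ᵥ φ = 1)
    (h : ∀ y, star φ ⬝ᵥ y = 0 → star y ⬝ᵥ v = 0) : v ∈ ℂ ∙ φ := by
  set y := v - (star φ ⬝ᵥ v) • φ
  have hy : star φ ⬝ᵥ y = 0 := by simp [y, dotProduct_sub, hφ]
  have hyφ : star y ⬝ᵥ φ = 0 := by rw [star_dotProduct, hy, star_zero]
  have hyy : star y ⬝ᵥ (v - (star φ ⬝ᵥ v) • φ) = 0 := by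
    rw [dotProduct_sub, dotProduct_smul, h y hy, hyφ, smul_zero, sub_zero]
  exact Submodule.mem_span_singleton.mpr
    ⟨_, (sub_eq_zero.mp (dotProduct_star_self_eq_zero.mp hyy)).symm⟩

theorem mulVec_mulVec_mem_span_of_sum_eq_proj {ρ : Matrix d d ℂ} (hρ : ρ.PosSemidef)
    {E : ι → Matrix d d ℂ} {φ : d → ℂ} (hφ : star φ ⬝ᵥ φ = 1)
    (h : ∑ k, E k * ρ * (E k)ᴴ = proj φ) (k : ι) (x : d → ℂ) :
    E k *ᵥ (ρ *ᵥ x) ∈ ℂ ∙ φ := by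
  refine mem_span_of_forall_orthogonal hφ fun y hy => ?_
  have hterm : ∀ j, star ((E j)ᴴ *ᵥ y) ⬝ᵥ ρ *ᵥ ((E j)ᴴ *ᵥ y)
      = star y ⬝ᵥ (E j * ρ * (E j)ᴴ) *ᵥ y := fun j => by
    rw [star_mulVec, conjTranspose_conjTranspose, ← dotProduct_mulVec, mulVec_mulVec,
      mulVec_mulVec]
  have hsum : ∑ j, star ((E j)ᴴ *ᵥ y) ⬝ᵥ ρ *ᵥ ((E j)ᴴ *ᵥ y) = 0 := by
    simp only [hterm, ← dotProduct_sum, ← sum_mulVec, h, proj_mulVec, hy, zero_smul,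
      dotProduct_zero]
  have hρy : ρ *ᵥ ((E k)ᴴ *ᵥ y) = 0 := by
    rw [← hρ.dotProduct_mulVec_zero_iff]
    exact (Finset.sum_eq_zero_iff_of_nonneg fun j _ => hρ.dotProduct_mulVec_nonneg _).mp hsum
      k (Finset.mem_univ k)
  calc star y ⬝ᵥ E k *ᵥ ρ *ᵥ x = star (ρ *ᵥ (E k)ᴴ *ᵥ y) ⬝ᵥ x := by
        rw [star_mulVec, star_mulVec, hρ.1.eq, conjTranspose_conjTranspose, dotProduct_mulVec,
          dotProduct_mulVec]
    _ = 0 := by rw [hρy, star_zero, zero_dotProduct]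

theorem exists_mulVec_mulVec_ne_zero_of_sum_eq_proj {ρ : Matrix d d ℂ} {E : ι → Matrix d d ℂ}
    {φ : d → ℂ} (hφ : star φ ⬝ᵥ φ = 1) (h : ∑ k, E k * ρ * (E k)ᴴ = proj φ) :
    ∃ k x, E k *ᵥ (ρ *ᵥ x) ≠ 0 := by
  by_contra! hzero
  have : proj φ *ᵥ φ = 0 := by
    simp only [← h, sum_mulVec, ← mulVec_mulVec, hzero, Finset.sum_const_zero]
  rw [proj_mulVec, hφ, one_smul] at this
  simp [this] at hφ

theorem eq_zero_of_sum_mul_eq_one {R : Type*} [Semiring R] [DecidableEq d]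
    {F E : ι → Matrix d d R} (h : ∑ k, F k * E k = 1) {x : d → R} (hx : ∀ k, E k *ᵥ x = 0) :
    x = 0 := by
  rw [← one_mulVec x, ← h, sum_mulVec]
  simp [← mulVec_mulVec, hx]

end SeparableOperations

theorem no_sep_distillation_two_three_general {n : ℕ}
    (ρ : Matrix (Fin 2 × Fin 3) (Fin 2 × Fin 3) ℂ)
    (hρ : ρ.PosSemidef) (hrank : 2 ≤ ρ.rank)
    (φ : Fin 2 × Fin 3 → ℂ) (hunit : star φ ⬝ᵥ φ = 1) (hent : ¬ IsSimpleVec φ)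
    (A : Fin n → Matrix (Fin 2) (Fin 2) ℂ) (B : Fin n → Matrix (Fin 3) (Fin 3) ℂ)
    (hcomp : ∑ k, (A k ⊗ₖ B k)ᴴ * (A k ⊗ₖ B k) = 1) :
    ∑ k, (A k ⊗ₖ B k) * ρ * (A k ⊗ₖ B k)ᴴ ≠ proj φ := by
  intro h
  have hrange := mulVec_mulVec_mem_span_of_sum_eq_proj hρ hunit h
  obtain ⟨k₀, w, hw⟩ := exists_mulVec_mulVec_ne_zero_of_sum_eq_proj hunit h
  have hw_ent : ¬ IsSimpleVec ((A k₀ ⊗ₖ B k₀) *ᵥ (ρ *ᵥ w)) :=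
    fun hs => hw (eq_zero_of_isSimpleVec_of_mem_span hent (hrange k₀ w) hs)
  obtain ⟨_, ⟨x, rfl⟩, hx0, hk₀x⟩ :=
    Submodule.exists_mem_ne_zero_map_eq_zero (A k₀ ⊗ₖ B k₀).mulVecLin
      (p := LinearMap.range ρ.mulVecLin) (q := ℂ ∙ φ)
      (by rintro _ ⟨_, ⟨y, rfl⟩, rfl⟩; exact hrange k₀ y)
      ((finrank_span_le_card ({φ} : Set _)).trans_lt
        (by rw [Set.toFinset_singleton, Finset.card_singleton]; exact hrank))
  have hx_simple : IsSimpleVec (ρ *ᵥ x) := isSimpleVec_of_kronecker_mulVec_eq_zero hw_ent hk₀x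
  refine hx0 (eq_zero_of_sum_mul_eq_one hcomp fun k => ?_)
  exact eq_zero_of_isSimpleVec_of_mem_span hent (hrange k x) (hx_simple.kronecker_mulVec _ _)

theorem no_sep_distillation_two_three {n : ℕ}
    (ρ : Matrix (Fin 2 × Fin 3) (Fin 2 × Fin 3) ℂ)
    (hρ : ρ.PosSemidef) (htr : ρ.trace = 1) (hrank : 2 ≤ ρ.rank)
    (φ : Fin 2 × Fin 3 → ℂ) (hunit : star φ ⬝ᵥ φ = 1) (hent : ¬ IsSimpleVec φ)
    (A : Fin n → Matrix (Fin 2) (Fin 2) ℂ) (B : Fin n → Matrix (Fin 3) (Fin 3) ℂ)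
    (hcomp : ∑ k, (A k ⊗ₖ B k)ᴴ * (A k ⊗ₖ B k) = 1) :
    ∑ k, (A k ⊗ₖ B k) * ρ * (A k ⊗ₖ B k)ᴴ ≠ proj φ :=
  no_sep_distillation_two_three_general ρ hρ hrank φ hunit hent A B hcomp
end
end

section
/- For every p with 0 < p < 1, let ρ = p|ψ₁⟩⟨ψ₁| + (1−p)|ψ₂⟩⟨ψ₂| on ℂ³ ⊗ ℂ³. Then there exist an entangled unit vector φ ∈ ℂ³ ⊗ ℂ³ and a separable operation given by Kraus operators {A_k ⊗ B_k}_{k=1,…,n} with ∑_k (A_k ⊗ B_k)†(A_k ⊗ B_k) = I such that ∑_k (A_k ⊗ B_k) ρ (A_k ⊗ B_k)† = |φ⟩⟨φ|. That is, a mixed state on ℂ³ ⊗ ℂ³ can be deterministically transformed into a pure entangled state by a separable operation. -/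
open Kronecker Matrix ComplexOrder

noncomputable section

/-- The standard basis vector `|i⟩` of `ℂ³`. -/
def e (i : Fin 3) : Fin 3 → ℂ := Pi.single i 1

/-- `ψ₁ = (|0⟩⊗|1⟩ + |1⟩⊗|0⟩)/√2`. -/
def ψ₁ : Fin 3 × Fin 3 → ℂ :=
  ((Real.sqrt 2 : ℝ) : ℂ)⁻¹ • (fun p => e 0 p.1 * e 1 p.2 + e 1 p.1 * e 0 p.2)

/-- `ψ₂ = (|0⟩⊗|2⟩ + |2⟩⊗|0⟩)/√2`. -/
def ψ₂ : Fin 3 × Fin 3 → ℂ :=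
  ((Real.sqrt 2 : ℝ) : ℂ)⁻¹ • (fun p => e 0 p.1 * e 2 p.2 + e 2 p.1 * e 0 p.2)

/-!
Every Kraus operator below sends both `ψ₁` and `ψ₂` into the line `ℂ φ`, so each term `E ρ Eᴴ`
is a multiple of `|φ⟩⟨φ|`; since the operation preserves the trace, the sum is `|φ⟩⟨φ|` whatever
`p` is. A vector of `ℂ³ ⊗ ℂ³` is handled through its `3 × 3` coefficient matrix `C`, on which
`A ⊗ B` acts as `C ↦ A C Bᵀ`, so all verifications are `3 × 3` matrix computations.
-/

section KrausMap

variable {d ι : Type*} [Fintype d] [Fintype ι]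

def krausMap (E : ι → Matrix d d ℂ) (ρ : Matrix d d ℂ) : Matrix d d ℂ :=
  ∑ k, E k * ρ * (E k)ᴴ

theorem mul_proj_mul_conjTranspose (M : Matrix d d ℂ) (v : d → ℂ) :
    M * proj v * Mᴴ = proj (M *ᵥ v) := by
  rw [proj, proj, mul_vecMulVec, vecMulVec_mul, ← star_mulVec]

theorem proj_smul (c : ℂ) (v : d → ℂ) : proj (c • v) = (c * star c) • proj v := by
  rw [proj, proj, star_smul, vecMulVec_smul, smul_vecMulVec, smul_smul, mul_comm]

theorem star_mulVec_dotProduct_mulVec (M : Matrix d d ℂ) (v : d → ℂ) :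
    star (M *ᵥ v) ⬝ᵥ (M *ᵥ v) = star v ⬝ᵥ (Mᴴ * M) *ᵥ v := by
  rw [star_mulVec, ← dotProduct_mulVec, mulVec_mulVec]

theorem star_inv_sqrt_two_smul_dotProduct {v : d → ℂ} (hv : star v ⬝ᵥ v = 2) :
    star (((Real.sqrt 2 : ℝ) : ℂ)⁻¹ • v) ⬝ᵥ (((Real.sqrt 2 : ℝ) : ℂ)⁻¹ • v) = 1 := by
  rw [star_smul, smul_dotProduct, dotProduct_smul, hv, smul_eq_mul, smul_eq_mul, star_inv₀,
    Complex.star_def, Complex.conj_ofReal, ← mul_assoc, ← mul_inv, ← Complex.ofReal_mul,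
    Real.mul_self_sqrt zero_le_two]
  norm_num

/-- The weights `‖Eₖ v‖²` add up to `‖v‖²` by the completeness relation. -/
theorem krausMap_proj_of_mem_span [DecidableEq d] {E : ι → Matrix d d ℂ}
    (hE : ∑ k, (E k)ᴴ * E k = 1) {φ v : d → ℂ} (hφ : star φ ⬝ᵥ φ = 1)
    (hv : ∀ k, E k *ᵥ v ∈ ℂ ∙ φ) :
    krausMap E (proj v) = (star v ⬝ᵥ v) • proj φ := by
  choose c hc using fun k => Submodule.mem_span_singleton.mp (hv k)
  have hweight : ∀ k, c k * star (c k) = star (E k *ᵥ v) ⬝ᵥ (E k *ᵥ v) := by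
    intro k
    rw [← hc k, star_smul, smul_dotProduct, dotProduct_smul, hφ, smul_eq_mul, smul_eq_mul,
      mul_one, mul_comm]
  have hsum : ∑ k, c k * star (c k) = star v ⬝ᵥ v := by
    simp only [hweight, star_mulVec_dotProduct_mulVec, ← dotProduct_sum, ← sum_mulVec, hE,
      one_mulVec]
  simp only [krausMap, mul_proj_mul_conjTranspose, ← hc, proj_smul, ← Finset.sum_smul, hsum]

theorem krausMap_mixture_eq_proj [DecidableEq d] {E : ι → Matrix d d ℂ}
    (hE : ∑ k, (E k)ᴴ * E k = 1) {φ v w : d → ℂ} (hφ : star φ ⬝ᵥ φ = 1)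
    (hv : star v ⬝ᵥ v = 1) (hw : star w ⬝ᵥ w = 1)
    (hEv : ∀ k, E k *ᵥ v ∈ ℂ ∙ φ) (hEw : ∀ k, E k *ᵥ w ∈ ℂ ∙ φ) {p q : ℂ} (hpq : p + q = 1) :
    krausMap E (p • proj v + q • proj w) = proj φ := by
  have hlin : krausMap E (p • proj v + q • proj w) =
      p • krausMap E (proj v) + q • krausMap E (proj w) := by
    simp only [krausMap, mul_add, add_mul, mul_smul_comm, smul_mul_assoc, Finset.sum_add_distrib,
      Finset.smul_sum]
  rw [hlin, krausMap_proj_of_mem_span hE hφ hEv, krausMap_proj_of_mem_span hE hφ hEw, hv, hw,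
    one_smul, ← add_smul, hpq, one_smul]

end KrausMap

theorem sum_kronecker_gram_eq_diagonal {ι m n : Type*} [Fintype ι] [Fintype m] [Fintype n]
    [DecidableEq m] [DecidableEq n] {A : ι → Matrix m m ℂ} {B : ι → Matrix n n ℂ}
    {a : ι → m → ℂ} {b : ι → n → ℂ} (hA : ∀ k, (A k)ᴴ * A k = diagonal (a k))
    (hB : ∀ k, (B k)ᴴ * B k = diagonal (b k)) :
    ∑ k, (A k ⊗ₖ B k)ᴴ * (A k ⊗ₖ B k) = diagonal fun p => ∑ k, a k p.1 * b k p.2 := by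
  simp only [conjTranspose_kronecker, ← mul_kronecker_mul, hA, hB, diagonal_kronecker_diagonal]
  ext p q
  simp only [Matrix.sum_apply, diagonal_apply]
  split_ifs <;> simp

theorem IsSimpleVec.mul_mul_eq {a b : ℕ} {v : Fin a × Fin b → ℂ} (hv : IsSimpleVec v)
    (i j : Fin a) (k l : Fin b) : v (i, k) * v (j, l) = v (i, l) * v (j, k) := by
  obtain ⟨x, y, rfl⟩ := hv
  ring

section CoefficientMatrix

/- `vec Cᵀ` is the vector of `ℂ^a ⊗ ℂ^b` whose coefficient on `|i⟩ ⊗ |j⟩` is `C i j`. -/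

variable {a b : Type*} [Fintype a] [Fintype b]

theorem kronecker_mulVec_vec_transpose (A : Matrix a a ℂ) (B : Matrix b b ℂ) (C : Matrix a b ℂ) :
    (A ⊗ₖ B) *ᵥ vec Cᵀ = vec (A * C * Bᵀ)ᵀ := by
  rw [kronecker_mulVec_vec, transpose_mul, transpose_mul, transpose_transpose, Matrix.mul_assoc]

theorem kronecker_mulVec_vec_transpose_mem_span {A : Matrix a a ℂ} {B : Matrix b b ℂ}
    {C Φ : Matrix a b ℂ} {c : ℂ} (h : A * C * Bᵀ = c • Φ) :
    (A ⊗ₖ B) *ᵥ vec Cᵀ ∈ ℂ ∙ vec Φᵀ :=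
  Submodule.mem_span_singleton.mpr
    ⟨c, by rw [kronecker_mulVec_vec_transpose, h, transpose_smul, vec_smul]⟩

end CoefficientMatrix

namespace SepDistillation

/- Coefficient matrices of `φ = (24|00⟩ + 7|11⟩)/25`, of `√2 ψ₁` and of `√2 ψ₂`. -/
def Φ : Matrix (Fin 3) (Fin 3) ℂ := !![24/25, 0, 0; 0, 7/25, 0; 0, 0, 0]
def Ψ₁ : Matrix (Fin 3) (Fin 3) ℂ := !![0, 1, 0; 1, 0, 0; 0, 0, 0]
def Ψ₂ : Matrix (Fin 3) (Fin 3) ℂ := !![0, 0, 1; 0, 0, 0; 1, 0, 0]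

theorem ψ₁_eq : ψ₁ = ((Real.sqrt 2 : ℝ) : ℂ)⁻¹ • vec Ψ₁ᵀ := by
  ext ⟨i, j⟩
  fin_cases i <;> fin_cases j <;> simp [ψ₁, Ψ₁, e]

theorem ψ₂_eq : ψ₂ = ((Real.sqrt 2 : ℝ) : ℂ)⁻¹ • vec Ψ₂ᵀ := by
  ext ⟨i, j⟩
  fin_cases i <;> fin_cases j <;> simp [ψ₂, Ψ₂, e]

theorem star_ψ₁_dotProduct : star ψ₁ ⬝ᵥ ψ₁ = 1 := by
  rw [ψ₁_eq]
  refine star_inv_sqrt_two_smul_dotProduct ?_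
  simp [Ψ₁, dotProduct, Fintype.sum_prod_type, Fin.sum_univ_three]
  norm_num

theorem star_ψ₂_dotProduct : star ψ₂ ⬝ᵥ ψ₂ = 1 := by
  rw [ψ₂_eq]
  refine star_inv_sqrt_two_smul_dotProduct ?_
  simp [Ψ₂, dotProduct, Fintype.sum_prod_type, Fin.sum_univ_three]
  norm_num

theorem star_vec_dotProduct_Φ : star (vec Φᵀ) ⬝ᵥ vec Φᵀ = 1 := by
  simp [Φ, dotProduct, Fintype.sum_prod_type, Fin.sum_univ_three, map_ofNat]
  norm_num

theorem not_isSimpleVec_Φ : ¬ IsSimpleVec (vec Φᵀ) := by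
  intro h
  have := h.mul_mul_eq 0 1 0 1
  norm_num [Φ] at this

/- The Kraus operators are `alice k ⊗ bob k`. As `(8/5)(3/5) = (4/5)(6/5) = 24/25`, operator
`j - 1` sends `|0j⟩ + |j0⟩` to `φ` and kills the other one (`j = 1, 2`), and operator `j + 1` does
the same with the tensor factors swapped. As `(3/5)² + (4/5)² = 1`, their Gram matrices add up
to the identity except at `|00⟩`, `|12⟩` and `|21⟩`; the last three operators, which kill both
vectors, fill these up, the first one with `233/625 = (13² + 8²)/625`. -/
def alice : Fin 7 → Matrix (Fin 3) (Fin 3) ℂ :=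
  ![!![8/5, 0, 0; 0, 1, 0; 0, 0, 0], !![8/5, 0, 0; 0, 0, 1; 0, 0, 0],
    !![0, 4/5, 0; 7/25, 0, 0; 0, 0, 0], !![0, 0, 4/5; 7/25, 0, 0; 0, 0, 0],
    !![1, 0, 0; 0, 0, 0; 0, 0, 0], !![0, 0, 0; 0, 1, 0; 0, 0, 0], !![0, 0, 0; 0, 0, 0; 0, 0, 1]]

def bob : Fin 7 → Matrix (Fin 3) (Fin 3) ℂ :=
  ![!![0, 3/5, 0; 7/25, 0, 0; 0, 0, 0], !![0, 0, 3/5; 7/25, 0, 0; 0, 0, 0],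
    !![6/5, 0, 0; 0, 1, 0; 0, 0, 0], !![6/5, 0, 0; 0, 0, 1; 0, 0, 0],
    !![13/25, 0, 0; 8/25, 0, 0; 0, 0, 0], !![0, 0, 0; 0, 0, 0; 0, 0, 1],
    !![0, 0, 0; 0, 1, 0; 0, 0, 0]]

theorem alice_gram (k : Fin 7) :
    (alice k)ᴴ * alice k = diagonal (![![64/25, 1, 0], ![64/25, 0, 1], ![49/625, 16/25, 0],
      ![49/625, 0, 16/25], ![1, 0, 0], ![0, 1, 0], ![0, 0, 1]] k) := by
  ext i j
  fin_cases k <;> fin_cases i <;> fin_cases j <;>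
    simp [alice, mul_apply, Fin.sum_univ_three, conjTranspose_apply, map_ofNat] <;> norm_num

theorem bob_gram (k : Fin 7) :
    (bob k)ᴴ * bob k = diagonal (![![49/625, 9/25, 0], ![49/625, 0, 9/25], ![36/25, 1, 0],
      ![36/25, 0, 1], ![233/625, 0, 0], ![0, 0, 1], ![0, 1, 0]] k) := by
  ext i j
  fin_cases k <;> fin_cases i <;> fin_cases j <;>
    simp [bob, mul_apply, Fin.sum_univ_three, conjTranspose_apply, map_ofNat] <;> norm_num

theorem sum_gram_eq_one : ∑ k, (alice k ⊗ₖ bob k)ᴴ * (alice k ⊗ₖ bob k) = 1 := by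
  rw [sum_kronecker_gram_eq_diagonal alice_gram bob_gram, ← diagonal_one]
  congr 1
  ext ⟨i, j⟩
  fin_cases i <;> fin_cases j <;> simp [Fin.sum_univ_succ] <;> norm_num

theorem alice_mul_Ψ₁_mul_bob (k : Fin 7) :
    alice k * Ψ₁ * (bob k)ᵀ = (![1, 0, 1, 0, 0, 0, 0] k : ℂ) • Φ := by
  ext i j
  fin_cases k <;> fin_cases i <;> fin_cases j <;>
    simp [alice, bob, Ψ₁, Φ, mul_apply, Fin.sum_univ_three] <;> norm_num

theorem alice_mul_Ψ₂_mul_bob (k : Fin 7) :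
    alice k * Ψ₂ * (bob k)ᵀ = (![0, 1, 0, 1, 0, 0, 0] k : ℂ) • Φ := by
  ext i j
  fin_cases k <;> fin_cases i <;> fin_cases j <;>
    simp [alice, bob, Ψ₂, Φ, mul_apply, Fin.sum_univ_three] <;> norm_num

theorem kronecker_mulVec_ψ₁_mem_span (k : Fin 7) :
    (alice k ⊗ₖ bob k) *ᵥ ψ₁ ∈ ℂ ∙ vec Φᵀ := by
  rw [ψ₁_eq, mulVec_smul]
  exact Submodule.smul_mem _ _ (kronecker_mulVec_vec_transpose_mem_span (alice_mul_Ψ₁_mul_bob k))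

theorem kronecker_mulVec_ψ₂_mem_span (k : Fin 7) :
    (alice k ⊗ₖ bob k) *ᵥ ψ₂ ∈ ℂ ∙ vec Φᵀ := by
  rw [ψ₂_eq, mulVec_smul]
  exact Submodule.smul_mem _ _ (kronecker_mulVec_vec_transpose_mem_span (alice_mul_Ψ₂_mul_bob k))

end SepDistillation

open SepDistillation in
theorem sep_distillation_three_three_general (p : ℝ) :
    ∃ (φ : Fin 3 × Fin 3 → ℂ) (n : ℕ)
      (A : Fin n → Matrix (Fin 3) (Fin 3) ℂ) (B : Fin n → Matrix (Fin 3) (Fin 3) ℂ),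
      star φ ⬝ᵥ φ = 1 ∧ ¬ IsSimpleVec φ ∧
      (∑ k, (A k ⊗ₖ B k)ᴴ * (A k ⊗ₖ B k) = 1) ∧
      ∑ k, (A k ⊗ₖ B k) * ((p : ℂ) • proj ψ₁ + ((1 - p : ℝ) : ℂ) • proj ψ₂) * (A k ⊗ₖ B k)ᴴ
        = proj φ := by
  refine ⟨vec Φᵀ, 7, alice, bob, star_vec_dotProduct_Φ, not_isSimpleVec_Φ, sum_gram_eq_one, ?_⟩
  exact krausMap_mixture_eq_proj sum_gram_eq_one star_vec_dotProduct_Φ star_ψ₁_dotProduct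
    star_ψ₂_dotProduct kronecker_mulVec_ψ₁_mem_span kronecker_mulVec_ψ₂_mem_span (by push_cast; ring)

theorem sep_distillation_three_three (p : ℝ) (hp0 : 0 < p) (hp1 : p < 1) :
    ∃ (φ : Fin 3 × Fin 3 → ℂ) (n : ℕ)
      (A : Fin n → Matrix (Fin 3) (Fin 3) ℂ) (B : Fin n → Matrix (Fin 3) (Fin 3) ℂ),
      star φ ⬝ᵥ φ = 1 ∧ ¬ IsSimpleVec φ ∧
      (∑ k, (A k ⊗ₖ B k)ᴴ * (A k ⊗ₖ B k) = 1) ∧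
      ∑ k, (A k ⊗ₖ B k) * ((p : ℂ) • proj ψ₁ + ((1 - p : ℝ) : ℂ) • proj ψ₂) * (A k ⊗ₖ B k)ᴴ
        = proj φ :=
  sep_distillation_three_three_general p
end
end

section
/- Every nonzero vector in the linear span of ψ₁ = (|0⟩⊗|1⟩ + |1⟩⊗|0⟩)/√2 and ψ₂ = (|0⟩⊗|2⟩ + |2⟩⊗|0⟩)/√2 in ℂ³ ⊗ ℂ³ is entangled; that is, no nonzero linear combination a·ψ₁ + b·ψ₂ can be written as x ⊗ y for vectors x, y ∈ ℂ³. -/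
open Kronecker Matrix

noncomputable section

/-! A product vector `x ⊗ y` has a rank-one coefficient matrix, so all its `2 × 2` minors
vanish. In `a • ψ₁ + b • ψ₂` the entries `(0, 0)` and `(k, k)` are zero, so the minor on rows and
columns `{0, k}` is `-(a / √2)²` for `k = 1` and `-(b / √2)²` for `k = 2`. -/

theorem IsSimpleVec.apply_mul_apply {a b : ℕ} {v : Fin a × Fin b → ℂ} (hv : IsSimpleVec v)
    (i k : Fin a) (j l : Fin b) : v (i, j) * v (k, l) = v (i, l) * v (k, j) := by
  obtain ⟨x, y, rfl⟩ := hv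
  ring

theorem span_is_entangled (a b : ℂ) (h : a • ψ₁ + b • ψ₂ ≠ 0) :
    ¬ IsSimpleVec (a • ψ₁ + b • ψ₂) := by
  intro hsimple
  have hsqrt : ((Real.sqrt 2 : ℝ) : ℂ)⁻¹ ≠ 0 := by simp
  have ha : a = 0 := by
    simpa [ψ₁, ψ₂, e, hsqrt] using hsimple.apply_mul_apply 0 1 1 0
  have hb : b = 0 := by
    simpa [ψ₁, ψ₂, e, hsqrt] using hsimple.apply_mul_apply 0 2 2 0
  exact h (by simp [ha, hb])
end
end

section
/- Let ψ₁, ψ₂ ∈ ℂ² ⊗ ℂ³ be linearly independent vectors such that no nonzero vector in their linear span is a product (simple) vector. Then there do not exist a 2×2 matrix A, a 3×3 matrix B, nonzero complex scalars c and d, and an entangled vector φ ∈ ℂ² ⊗ ℂ³ with (A ⊗ B)ψ₁ = c·φ and (A ⊗ B)ψ₂ = d·φ. -/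
open Kronecker Matrix

noncomputable section

/-!
Reshape each `v : Fin 2 × Fin 3 → ℂ` into the `2 × 3` matrix `W v := of (Function.curry v)`.
Product vectors are those with `rank (W v) ≤ 1`, and `A ⊗ B` acts by `W ↦ A * W * Bᵀ`. Since the
common image `φ` is entangled, `rank A = 2` and `rank B ≥ 2`. The nonzero vector `d • ψ₁ - c • ψ₂`
of the span is entangled, so its reshaping `W` has rank `2`; it is annihilated by `A ⊗ B`, i.e.
`A * W * Bᵀ = 0`, and as `A` has full rank, `W * Bᵀ = 0`, forcing `2 + rank B ≤ 3`.
-/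

namespace Matrix

theorem of_curry_kronecker_mulVec {R l m n p : Type*} [NonUnitalCommSemiring R] [Fintype m]
    [Fintype n] (A : Matrix l m R) (B : Matrix p n R) (v : m × n → R) :
    of (Function.curry ((A ⊗ₖ B) *ᵥ v)) = A * of (Function.curry v) * Bᵀ := by
  rw [← transpose_inj, ← vec_inj, transpose_mul, transpose_mul, transpose_transpose,
    ← Matrix.mul_assoc, ← kronecker_mulVec_vec]
  rfl

variable {K l m n p : Type*} [Field K] [Fintype n]

theorem eq_zero_of_rank_eq_zero_s13 {M : Matrix m n K} (h : M.rank = 0) : M = 0 := by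
  classical
  rw [rank, Submodule.finrank_eq_zero, LinearMap.range_eq_bot] at h
  ext i j
  simpa using congrFun (LinearMap.congr_fun h (Pi.single j 1)) i

theorem exists_eq_vecMulVec_of_rank_le_one {M : Matrix m n K} (h : M.rank ≤ 1) :
    ∃ (x : m → K) (y : n → K), M = vecMulVec x y := by
  classical
  obtain ⟨x, hx⟩ := finrank_le_one_iff.mp h
  have hcol (j : n) : ∃ c : K, c • (x : m → K) = M *ᵥ Pi.single j 1 := by
    obtain ⟨c, hc⟩ := hx ⟨_, Pi.single j 1, rfl⟩
    exact ⟨c, congrArg Subtype.val hc⟩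
  choose y hy using hcol
  refine ⟨x, y, ext fun i j => ?_⟩
  simpa [vecMulVec_apply, mul_comm] using (congrFun (hy j) i).symm

theorem rank_add_rank_le_of_mul_mul_eq_zero [Finite l] [Fintype m] [Fintype p]
    {A : Matrix l m K} {X : Matrix m n K} {B : Matrix n p K}
    (hA : A.rank = Fintype.card m) (h : A * X * B = 0) :
    X.rank + B.rank ≤ Fintype.card n := by
  have hXB : (X * B).rank = 0 := by
    have := rank_add_rank_le_card_of_mul_eq_zero (by rwa [Matrix.mul_assoc] at h)
    omega
  exact rank_add_rank_le_card_of_mul_eq_zero (eq_zero_of_rank_eq_zero_s13 hXB)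

end Matrix

theorem IsSimpleVec.smul {a b : ℕ} {v : Fin a × Fin b → ℂ} (c : ℂ) (h : IsSimpleVec v) :
    IsSimpleVec (c • v) := by
  obtain ⟨x, y, rfl⟩ := h
  exact ⟨c • x, y, by funext p; simp [mul_assoc]⟩

theorem two_le_rank_of_not_isSimpleVec {a b : ℕ} {v : Fin a × Fin b → ℂ}
    (h : ¬ IsSimpleVec v) : 2 ≤ (of (Function.curry v)).rank := by
  by_contra! hlt
  obtain ⟨x, y, hxy⟩ := exists_eq_vecMulVec_of_rank_le_one (Nat.le_of_lt_succ hlt)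
  exact h ⟨x, y, funext fun p => congrFun (congrFun hxy p.1) p.2⟩

theorem no_single_kraus_maps_both {ψ₁ ψ₂ : Fin 2 × Fin 3 → ℂ}
    (hind : LinearIndependent ℂ ![ψ₁, ψ₂])
    (hspan : ∀ v ∈ Submodule.span ℂ {ψ₁, ψ₂}, v ≠ 0 → ¬ IsSimpleVec v) :
    ¬ ∃ (A : Matrix (Fin 2) (Fin 2) ℂ) (B : Matrix (Fin 3) (Fin 3) ℂ)
        (c d : ℂ) (φ : Fin 2 × Fin 3 → ℂ),
        c ≠ 0 ∧ d ≠ 0 ∧ ¬ IsSimpleVec φ ∧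
        (A ⊗ₖ B).mulVec ψ₁ = c • φ ∧ (A ⊗ₖ B).mulVec ψ₂ = d • φ := by
  rintro ⟨A, B, c, d, φ, hc, hd, hφ, h₁, h₂⟩
  have himage : 2 ≤ (A * of (Function.curry ψ₁) * Bᵀ).rank := by
    refine of_curry_kronecker_mulVec A B ψ₁ ▸ two_le_rank_of_not_isSimpleVec fun hs => hφ ?_
    simpa [h₁, smul_smul, hc] using hs.smul c⁻¹
  have hA : A.rank = 2 := le_antisymm A.rank_le_width <|
    himage.trans <| (rank_mul_le_left _ _).trans (rank_mul_le_left _ _)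
  have hB : 2 ≤ B.rank := rank_transpose B ▸ himage.trans (rank_mul_le_right _ _)
  set w := d • ψ₁ - c • ψ₂
  have hw_mem : w ∈ Submodule.span ℂ {ψ₁, ψ₂} :=
    Submodule.sub_mem _ (Submodule.smul_mem _ _ (Submodule.subset_span (by simp)))
      (Submodule.smul_mem _ _ (Submodule.subset_span (by simp)))
  have hw_ne : w ≠ 0 := fun hw =>
    hd (LinearIndependent.pair_iff.mp hind d (-c) (by rwa [neg_smul, ← sub_eq_add_neg])).1
  have hw : 2 ≤ (of (Function.curry w)).rank :=
    two_le_rank_of_not_isSimpleVec (hspan w hw_mem hw_ne)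
  have hw_ker : A * of (Function.curry w) * Bᵀ = 0 := by
    rw [← of_curry_kronecker_mulVec, mulVec_sub, mulVec_smul, mulVec_smul, h₁, h₂, smul_smul,
      smul_smul, mul_comm, sub_self]
    rfl
  have := rank_add_rank_le_of_mul_mul_eq_zero (by simpa using hA) hw_ker
  simp only [rank_transpose, Fintype.card_fin] at this
  omega
end
end
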